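/- Let n ≥ 2, let λ_1,…,λ_n, μ_1,…,μ_n ∈ ℝ, let v_1,…,v_n and w_1,…,w_n be orthonormal families in ℝ^n, and let P be the tensor with P_{abcd} = Σ_{i,j=1}^n λ_i μ_j v_i(a) v_i(b) w_j(c) w_j(d) ⟨v_i, w_j⟩. Then h_n(P) = det(V) · det(W) · Σ_{σ,γ ∈ S_n} sgn(σ)sgn(γ) · ( Π_{t=1}^n ⟨v_{σ(t)}, w_{γ(t)}⟩ ) · ( Π_{t=1}^n ⟨v_{σ(t)}, w_{γ(t+1)}⟩ ), where V and W are the n×n matrices whose rows are v_1,…,v_n and w_1,…,w_n respectively, and in the second product γ(t+1) is read cyclically, so the factor for t = n is ⟨v_{σ(n)}, w_{γ(1)}⟩. -/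
import Mathlib


open Finset Matrix

private lemma sumSign {n : ℕ} (u : Fin n → Fin n → ℝ) (x : Fin n → Fin n) :
    ∑ σ : Equiv.Perm (Fin n), ((Equiv.Perm.sign σ : ℤ) : ℝ) * ∏ t, u (x t) (σ t)
      = (Matrix.of fun t s => u (x t) s).det := by
  rw [← Matrix.det_transpose, Matrix.det_apply']
  exact Finset.sum_congr rfl fun σ _ => by simp [Matrix.transpose_apply]

private lemma sumSign_eq_zero {n : ℕ} (u : Fin n → Fin n → ℝ) (x : Fin n → Fin n)
    (hx : ¬ Function.Injective x) :
    ∑ σ : Equiv.Perm (Fin n), ((Equiv.Perm.sign σ : ℤ) : ℝ) * ∏ t, u (x t) (σ t) = 0 := by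
  rw [sumSign]
  obtain ⟨a, b, hab, hne⟩ := Function.not_injective_iff.mp hx
  exact Matrix.det_zero_of_row_eq hne (by funext s; simp [hab])

private lemma sumSign_perm {n : ℕ} (u : Fin n → Fin n → ℝ) (e : Equiv.Perm (Fin n)) :
    ∑ σ : Equiv.Perm (Fin n), ((Equiv.Perm.sign σ : ℤ) : ℝ) * ∏ t, u (e t) (σ t)
      = ((Equiv.Perm.sign e : ℤ) : ℝ) * (Matrix.of u).det := by
  rw [sumSign]
  have h : (Matrix.of fun t s => u (e t) s) = (Matrix.of u).submatrix (⇑e) id := rfl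
  rw [h, Matrix.det_permute]

private lemma sum_fun_eq_sum_perm {n : ℕ} (f : (Fin n → Fin n) → ℝ)
    (hf : ∀ x, ¬ Function.Injective x → f x = 0) :
    ∑ x : Fin n → Fin n, f x = ∑ e : Equiv.Perm (Fin n), f ⇑e := by
  classical
  rw [← Finset.sum_filter_of_ne (p := fun x => Function.Bijective x)
    (fun x _ hfx => Finite.injective_iff_bijective.mp (by by_contra h; exact hfx (hf x h)))]
  refine Finset.sum_bij' (fun x hx => Equiv.ofBijective x (Finset.mem_filter.mp hx).2)
    (fun e _ => ⇑e) (fun _ _ => Finset.mem_univ _)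
    (fun e _ => Finset.mem_filter.mpr ⟨Finset.mem_univ _, e.bijective⟩)
    (fun a ha => rfl) (fun e he => Equiv.ext fun _ => rfl) (fun a ha => rfl)

private lemma sum_comm4 {α β γ δ : Type*} [Fintype α] [Fintype β] [Fintype γ] [Fintype δ]
    (f : α → β → γ → δ → ℝ) :
    ∑ a : α, ∑ b : β, ∑ x : γ, ∑ y : δ, f a b x y
      = ∑ x : γ, ∑ y : δ, ∑ a : α, ∑ b : β, f a b x y := by
  calc ∑ a : α, ∑ b : β, ∑ x : γ, ∑ y : δ, f a b x y
      = ∑ a : α, ∑ x : γ, ∑ b : β, ∑ y : δ, f a b x y :=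
        Finset.sum_congr rfl fun a _ => Finset.sum_comm
    _ = ∑ x : γ, ∑ a : α, ∑ b : β, ∑ y : δ, f a b x y := Finset.sum_comm
    _ = ∑ x : γ, ∑ a : α, ∑ y : δ, ∑ b : β, f a b x y :=
        Finset.sum_congr rfl fun x _ => Finset.sum_congr rfl fun a _ => Finset.sum_comm
    _ = ∑ x : γ, ∑ y : δ, ∑ a : α, ∑ b : β, f a b x y :=
        Finset.sum_congr rfl fun x _ => Finset.sum_comm

private lemma Szero {n : ℕ} (c : Fin n → Fin n → ℝ)
    (hc : ∀ s t, (∑ a, c a s * c a t) = if s = t then 1 else 0) (z : Fin n)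
    (hz : ∀ t : Fin n, t + z ≠ t) :
    ∑ σ : Equiv.Perm (Fin n), ∑ γ : Equiv.Perm (Fin n),
      ((Equiv.Perm.sign σ : ℤ) : ℝ) * ((Equiv.Perm.sign γ : ℤ) : ℝ) *
        ∏ t, (c (σ t) (γ t) * c (σ t) (γ (t + z))) = 0 := by
  have hn0 : 0 < n := lt_of_le_of_lt (Nat.zero_le _) z.isLt
  rw [Finset.sum_comm]
  refine Finset.sum_eq_zero fun γ _ => ?_
  have hdet : (Matrix.of fun a t => c a (γ t) * c a (γ (t + z))).det = 0 := by
    rw [← Matrix.exists_vecMul_eq_zero_iff]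
    refine ⟨1, ?_, ?_⟩
    · intro h
      have := congrFun h ⟨0, hn0⟩
      simp at this
    · funext t
      have hne : γ t ≠ γ (t + z) := fun h => hz t (γ.injective h.symm)
      have h1 : Matrix.vecMul (1 : Fin n → ℝ)
          (Matrix.of fun a t => c a (γ t) * c a (γ (t + z))) t
          = ∑ a, c a (γ t) * c a (γ (t + z)) := by
        simp [Matrix.vecMul, dotProduct]
      rw [Pi.zero_apply, h1, hc, if_neg hne]
  calc ∑ σ : Equiv.Perm (Fin n),
        ((Equiv.Perm.sign σ : ℤ) : ℝ) * ((Equiv.Perm.sign γ : ℤ) : ℝ) *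
          ∏ t, (c (σ t) (γ t) * c (σ t) (γ (t + z)))
      = ((Equiv.Perm.sign γ : ℤ) : ℝ) * ∑ σ : Equiv.Perm (Fin n),
          ((Equiv.Perm.sign σ : ℤ) : ℝ) *
            ∏ t, (Matrix.of fun a t => c a (γ t) * c a (γ (t + z))) (σ t) t := by
        rw [Finset.mul_sum]
        exact Finset.sum_congr rfl fun σ _ => by simp [Matrix.of_apply]; ring
    _ = ((Equiv.Perm.sign γ : ℤ) : ℝ) *
          (Matrix.of fun a t => c a (γ t) * c a (γ (t + z))).det := by
        rw [Matrix.det_apply']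
    _ = 0 := by rw [hdet, mul_zero]

private def Cmat {n : ℕ} (v w : Fin n → Fin n → ℝ) : Fin n → Fin n → ℝ :=
  fun i j => ∑ m, v i m * w j m

/-- For `P` in `SOT_{2,n}` written entrywise as
`P a b c d = ∑ i j, λ i * μ j * v i a * v i b * w j c * w j d * ⟨v i, w j⟩` with `v`, `w`
orthonormal families, the value of `hₙ` at `P` equals
`det V * det W * ∑ σ γ, sgn σ * sgn γ * (∏ t, ⟨v (σ t), w (γ t)⟩) * (∏ t, ⟨v (σ t), w (γ (t+1))⟩)`,
where `V`, `W` are the matrices whose rows are the `v i` and `w j`, and `t + 1` is cyclic in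
`Fin n` (so the factor for the last `t` is `⟨v (σ (n-1)), w (γ 0)⟩`). -/

theorem hn_eq_det_formula
    (n : ℕ) (hn : 2 ≤ n)
    (lam mu : Fin n → ℝ) (v w : Fin n → Fin n → ℝ)
    (hv : ∀ i j, (∑ k, v i k * v j k) = if i = j then 1 else 0)
    (hw : ∀ i j, (∑ k, w i k * w j k) = if i = j then 1 else 0)
    (P : Fin n → Fin n → Fin n → Fin n → ℝ)
    (hP : ∀ a b c d, P a b c d =
      ∑ i, ∑ j, lam i * mu j * v i a * v i b * w j c * w j d * (∑ k, v i k * w j k)) :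
    ∑ k : Fin n → Fin n, ∑ σ : Equiv.Perm (Fin n), ∑ γ : Equiv.Perm (Fin n),
      ((Equiv.Perm.sign σ : ℤ) : ℝ) * ((Equiv.Perm.sign γ : ℤ) : ℝ) *
        ∏ t : Fin n, P (k t) (σ t) (k (t - ⟨1, by omega⟩)) (γ t) =
    (Matrix.of v).det * (Matrix.of w).det *
      ∑ σ : Equiv.Perm (Fin n), ∑ γ : Equiv.Perm (Fin n),
        ((Equiv.Perm.sign σ : ℤ) : ℝ) * ((Equiv.Perm.sign γ : ℤ) : ℝ) *
          (∏ t : Fin n, ∑ m, v (σ t) m * w (γ t) m) *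
          (∏ t : Fin n, ∑ m, v (σ t) m * w (γ (t + ⟨1, by omega⟩)) m) := by
  classical
  haveI : NeZero n := ⟨by omega⟩
  generalize hone : (⟨1, by omega⟩ : Fin n) = z
  have hzval : z.val = 1 := by rw [← hone]
  have hz : ∀ t : Fin n, t + z ≠ t := by
    intro t h
    have hv' := congrArg Fin.val h
    rw [Fin.val_add, hzval] at hv'
    rcases Nat.lt_or_ge (t.val + 1) n with hlt | hge
    · rw [Nat.mod_eq_of_lt hlt] at hv'; omega
    · have ht : t.val + 1 = n := by have := t.isLt; omega
      rw [ht, Nat.mod_self] at hv'; omega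
  -- orthonormality of columns of C = V Wᵀ
  have hVV : Matrix.of v * (Matrix.of v)ᵀ = 1 := by
    ext i j
    rw [Matrix.mul_apply, Matrix.one_apply]
    simpa [Matrix.transpose_apply] using hv i j
  have hVV' : (Matrix.of v)ᵀ * Matrix.of v = 1 := mul_eq_one_comm.mp hVV
  have hWW : Matrix.of w * (Matrix.of w)ᵀ = 1 := by
    ext i j
    rw [Matrix.mul_apply, Matrix.one_apply]
    simpa [Matrix.transpose_apply] using hw i j
  have hCW : Matrix.of (Cmat v w) = Matrix.of v * (Matrix.of w)ᵀ := by
    ext i j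
    rw [Matrix.mul_apply]
    simp [Cmat, Matrix.transpose_apply]
  have hCm : (Matrix.of (Cmat v w))ᵀ * Matrix.of (Cmat v w) = 1 := by
    rw [hCW, Matrix.transpose_mul, Matrix.transpose_transpose, Matrix.mul_assoc,
      ← Matrix.mul_assoc ((Matrix.of v)ᵀ), hVV', Matrix.one_mul, hWW]
  have hc : ∀ s t, (∑ a, Cmat v w a s * Cmat v w a t) = if s = t then 1 else 0 := by
    intro s t
    have h2 := Matrix.ext_iff.mpr hCm s t
    rw [Matrix.mul_apply] at h2
    simpa [Matrix.transpose_apply, Matrix.one_apply] using h2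
  -- expand the product of entries of P
  have hexp : ∀ (k : Fin n → Fin n) (σ γ : Equiv.Perm (Fin n)),
      (∏ t : Fin n, P (k t) (σ t) (k (t - z)) (γ t)) =
      ∑ x : Fin n → Fin n, ∑ y : Fin n → Fin n, ∏ t : Fin n,
        (lam (x t) * mu (y t) * v (x t) (k t) * v (x t) (σ t) *
          w (y t) (k (t - z)) * w (y t) (γ t) * Cmat v w (x t) (y t)) := by
    intro k σ γ
    calc (∏ t : Fin n, P (k t) (σ t) (k (t - z)) (γ t))
        = ∏ t : Fin n, ∑ i, ∑ j,
            (lam i * mu j * v i (k t) * v i (σ t) *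
              w j (k (t - z)) * w j (γ t) * Cmat v w i j) := by
          simp only [Cmat]
          exact Finset.prod_congr rfl fun t _ => hP _ _ _ _
      _ = ∑ x : Fin n → Fin n, ∏ t : Fin n, ∑ j,
            (lam (x t) * mu j * v (x t) (k t) * v (x t) (σ t) *
              w j (k (t - z)) * w j (γ t) * Cmat v w (x t) j) := by
          rw [Finset.prod_univ_sum (fun _ => (Finset.univ : Finset (Fin n))),
            Fintype.piFinset_univ]
      _ = ∑ x : Fin n → Fin n, ∑ y : Fin n → Fin n, ∏ t : Fin n,
            (lam (x t) * mu (y t) * v (x t) (k t) * v (x t) (σ t) *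
              w (y t) (k (t - z)) * w (y t) (γ t) * Cmat v w (x t) (y t)) :=
          Finset.sum_congr rfl fun x _ => by
            rw [Finset.prod_univ_sum (fun _ => (Finset.univ : Finset (Fin n))),
              Fintype.piFinset_univ]
  -- factor the big product
  have hfact : ∀ (k x y : Fin n → Fin n) (σ γ : Equiv.Perm (Fin n)),
      (∏ t : Fin n, (lam (x t) * mu (y t) * v (x t) (k t) * v (x t) (σ t) *
          w (y t) (k (t - z)) * w (y t) (γ t) * Cmat v w (x t) (y t)))
      = (∏ t : Fin n, lam (x t)) * (∏ t : Fin n, mu (y t)) *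
        (∏ t : Fin n, Cmat v w (x t) (y t)) * (∏ t : Fin n, v (x t) (σ t)) *
        (∏ t : Fin n, w (y t) (γ t)) *
        (∏ t : Fin n, (v (x t) (k t) * w (y t) (k (t - z)))) := by
    intro k x y σ γ
    rw [← Finset.prod_mul_distrib, ← Finset.prod_mul_distrib, ← Finset.prod_mul_distrib,
      ← Finset.prod_mul_distrib, ← Finset.prod_mul_distrib]
    exact Finset.prod_congr rfl fun t _ => by ring
  -- the sum over k
  have hK : ∀ x y : Fin n → Fin n,
      (∑ k : Fin n → Fin n, ∏ t : Fin n, (v (x t) (k t) * w (y t) (k (t - z)))) =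
      ∏ t : Fin n, Cmat v w (x t) (y (t + z)) := by
    intro x y
    have hshift : ∀ k : Fin n → Fin n,
        (∏ t : Fin n, w (y t) (k (t - z))) = ∏ t : Fin n, w (y (t + z)) (k t) := by
      intro k
      exact (Fintype.prod_equiv (Equiv.addRight z)
        (fun t => w (y (t + z)) (k t)) (fun t => w (y t) (k (t - z)))
        (fun t => by simp [add_sub_cancel_right])).symm
    calc (∑ k : Fin n → Fin n, ∏ t : Fin n, (v (x t) (k t) * w (y t) (k (t - z))))
        = ∑ k : Fin n → Fin n, ∏ t : Fin n, (v (x t) (k t) * w (y (t + z)) (k t)) := by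
          refine Finset.sum_congr rfl fun k _ => ?_
          rw [Finset.prod_mul_distrib, Finset.prod_mul_distrib, hshift k]
      _ = ∏ t : Fin n, ∑ m, (v (x t) m * w (y (t + z)) m) := by
          rw [Finset.prod_univ_sum (fun _ => (Finset.univ : Finset (Fin n))),
            Fintype.piFinset_univ]
      _ = ∏ t : Fin n, Cmat v w (x t) (y (t + z)) :=
          Finset.prod_congr rfl fun t _ => rfl
  -- the key identity for the sum over k
  have hkey : ∀ σ γ : Equiv.Perm (Fin n),
      (∑ k : Fin n → Fin n, ∏ t : Fin n, P (k t) (σ t) (k (t - z)) (γ t)) =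
      ∑ x : Fin n → Fin n, ∑ y : Fin n → Fin n,
        ((∏ t : Fin n, lam (x t)) * (∏ t : Fin n, mu (y t)) *
          (∏ t : Fin n, Cmat v w (x t) (y t)) *
          (∏ t : Fin n, Cmat v w (x t) (y (t + z)))) *
        (∏ t : Fin n, v (x t) (σ t)) * (∏ t : Fin n, w (y t) (γ t)) := by
    intro σ γ
    calc (∑ k : Fin n → Fin n, ∏ t : Fin n, P (k t) (σ t) (k (t - z)) (γ t))
        = ∑ k : Fin n → Fin n, ∑ x : Fin n → Fin n, ∑ y : Fin n → Fin n, ∏ t : Fin n,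
            (lam (x t) * mu (y t) * v (x t) (k t) * v (x t) (σ t) *
              w (y t) (k (t - z)) * w (y t) (γ t) * Cmat v w (x t) (y t)) :=
          Finset.sum_congr rfl fun k _ => hexp k σ γ
      _ = ∑ x : Fin n → Fin n, ∑ k : Fin n → Fin n, ∑ y : Fin n → Fin n, ∏ t : Fin n,
            (lam (x t) * mu (y t) * v (x t) (k t) * v (x t) (σ t) *
              w (y t) (k (t - z)) * w (y t) (γ t) * Cmat v w (x t) (y t)) :=
          Finset.sum_comm
      _ = ∑ x : Fin n → Fin n, ∑ y : Fin n → Fin n, ∑ k : Fin n → Fin n, ∏ t : Fin n,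
            (lam (x t) * mu (y t) * v (x t) (k t) * v (x t) (σ t) *
              w (y t) (k (t - z)) * w (y t) (γ t) * Cmat v w (x t) (y t)) :=
          Finset.sum_congr rfl fun x _ => Finset.sum_comm
      _ = ∑ x : Fin n → Fin n, ∑ y : Fin n → Fin n,
            ((∏ t : Fin n, lam (x t)) * (∏ t : Fin n, mu (y t)) *
              (∏ t : Fin n, Cmat v w (x t) (y t)) *
              (∏ t : Fin n, Cmat v w (x t) (y (t + z)))) *
            (∏ t : Fin n, v (x t) (σ t)) * (∏ t : Fin n, w (y t) (γ t)) := by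
          refine Finset.sum_congr rfl fun x _ => Finset.sum_congr rfl fun y _ => ?_
          calc (∑ k : Fin n → Fin n, ∏ t : Fin n,
                (lam (x t) * mu (y t) * v (x t) (k t) * v (x t) (σ t) *
                  w (y t) (k (t - z)) * w (y t) (γ t) * Cmat v w (x t) (y t)))
              = ∑ k : Fin n → Fin n,
                  ((∏ t : Fin n, lam (x t)) * (∏ t : Fin n, mu (y t)) *
                    (∏ t : Fin n, Cmat v w (x t) (y t)) * (∏ t : Fin n, v (x t) (σ t)) *
                    (∏ t : Fin n, w (y t) (γ t)) *
                    (∏ t : Fin n, (v (x t) (k t) * w (y t) (k (t - z))))) :=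
                Finset.sum_congr rfl fun k _ => hfact k x y σ γ
            _ = ((∏ t : Fin n, lam (x t)) * (∏ t : Fin n, mu (y t)) *
                  (∏ t : Fin n, Cmat v w (x t) (y t)) * (∏ t : Fin n, v (x t) (σ t)) *
                  (∏ t : Fin n, w (y t) (γ t))) *
                (∑ k : Fin n → Fin n, ∏ t : Fin n,
                  (v (x t) (k t) * w (y t) (k (t - z)))) := (Finset.mul_sum _ _ _).symm
            _ = ((∏ t : Fin n, lam (x t)) * (∏ t : Fin n, mu (y t)) *
                  (∏ t : Fin n, Cmat v w (x t) (y t)) * (∏ t : Fin n, v (x t) (σ t)) *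
                  (∏ t : Fin n, w (y t) (γ t))) *
                (∏ t : Fin n, Cmat v w (x t) (y (t + z))) := by rw [hK x y]
            _ = ((∏ t : Fin n, lam (x t)) * (∏ t : Fin n, mu (y t)) *
                  (∏ t : Fin n, Cmat v w (x t) (y t)) *
                  (∏ t : Fin n, Cmat v w (x t) (y (t + z)))) *
                (∏ t : Fin n, v (x t) (σ t)) * (∏ t : Fin n, w (y t) (γ t)) := by ring
  -- the left-hand side vanishes
  have hL : (∑ k : Fin n → Fin n, ∑ σ : Equiv.Perm (Fin n), ∑ γ : Equiv.Perm (Fin n),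
      ((Equiv.Perm.sign σ : ℤ) : ℝ) * ((Equiv.Perm.sign γ : ℤ) : ℝ) *
        ∏ t : Fin n, P (k t) (σ t) (k (t - z)) (γ t)) = 0 := by
    calc (∑ k : Fin n → Fin n, ∑ σ : Equiv.Perm (Fin n), ∑ γ : Equiv.Perm (Fin n),
        ((Equiv.Perm.sign σ : ℤ) : ℝ) * ((Equiv.Perm.sign γ : ℤ) : ℝ) *
          ∏ t : Fin n, P (k t) (σ t) (k (t - z)) (γ t))
        = ∑ σ : Equiv.Perm (Fin n), ∑ k : Fin n → Fin n, ∑ γ : Equiv.Perm (Fin n),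
            ((Equiv.Perm.sign σ : ℤ) : ℝ) * ((Equiv.Perm.sign γ : ℤ) : ℝ) *
              ∏ t : Fin n, P (k t) (σ t) (k (t - z)) (γ t) := Finset.sum_comm
      _ = ∑ σ : Equiv.Perm (Fin n), ∑ γ : Equiv.Perm (Fin n), ∑ k : Fin n → Fin n,
            ((Equiv.Perm.sign σ : ℤ) : ℝ) * ((Equiv.Perm.sign γ : ℤ) : ℝ) *
              ∏ t : Fin n, P (k t) (σ t) (k (t - z)) (γ t) :=
          Finset.sum_congr rfl fun σ _ => Finset.sum_comm
      _ = ∑ σ : Equiv.Perm (Fin n), ∑ γ : Equiv.Perm (Fin n),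
            ((Equiv.Perm.sign σ : ℤ) : ℝ) * ((Equiv.Perm.sign γ : ℤ) : ℝ) *
              ∑ k : Fin n → Fin n, ∏ t : Fin n, P (k t) (σ t) (k (t - z)) (γ t) :=
          Finset.sum_congr rfl fun σ _ => Finset.sum_congr rfl fun γ _ =>
            (Finset.mul_sum _ _ _).symm
      _ = ∑ σ : Equiv.Perm (Fin n), ∑ γ : Equiv.Perm (Fin n),
            ((Equiv.Perm.sign σ : ℤ) : ℝ) * ((Equiv.Perm.sign γ : ℤ) : ℝ) *
              ∑ x : Fin n → Fin n, ∑ y : Fin n → Fin n,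
                ((∏ t : Fin n, lam (x t)) * (∏ t : Fin n, mu (y t)) *
                  (∏ t : Fin n, Cmat v w (x t) (y t)) *
                  (∏ t : Fin n, Cmat v w (x t) (y (t + z)))) *
                (∏ t : Fin n, v (x t) (σ t)) * (∏ t : Fin n, w (y t) (γ t)) :=
          Finset.sum_congr rfl fun σ _ => Finset.sum_congr rfl fun γ _ => by
            rw [hkey σ γ]
      _ = ∑ σ : Equiv.Perm (Fin n), ∑ γ : Equiv.Perm (Fin n),
            ∑ x : Fin n → Fin n, ∑ y : Fin n → Fin n,
              ((Equiv.Perm.sign σ : ℤ) : ℝ) * ((Equiv.Perm.sign γ : ℤ) : ℝ) *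
                (((∏ t : Fin n, lam (x t)) * (∏ t : Fin n, mu (y t)) *
                  (∏ t : Fin n, Cmat v w (x t) (y t)) *
                  (∏ t : Fin n, Cmat v w (x t) (y (t + z)))) *
                (∏ t : Fin n, v (x t) (σ t)) * (∏ t : Fin n, w (y t) (γ t))) := by
          refine Finset.sum_congr rfl fun σ _ => Finset.sum_congr rfl fun γ _ => ?_
          rw [Finset.mul_sum]
          exact Finset.sum_congr rfl fun x _ => by rw [Finset.mul_sum]
      _ = ∑ x : Fin n → Fin n, ∑ y : Fin n → Fin n,
            ∑ σ : Equiv.Perm (Fin n), ∑ γ : Equiv.Perm (Fin n),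
              ((Equiv.Perm.sign σ : ℤ) : ℝ) * ((Equiv.Perm.sign γ : ℤ) : ℝ) *
                (((∏ t : Fin n, lam (x t)) * (∏ t : Fin n, mu (y t)) *
                  (∏ t : Fin n, Cmat v w (x t) (y t)) *
                  (∏ t : Fin n, Cmat v w (x t) (y (t + z)))) *
                (∏ t : Fin n, v (x t) (σ t)) * (∏ t : Fin n, w (y t) (γ t))) :=
          sum_comm4 _
      _ = ∑ x : Fin n → Fin n, ∑ y : Fin n → Fin n,
            ((∏ t : Fin n, lam (x t)) * (∏ t : Fin n, mu (y t)) *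
              (∏ t : Fin n, Cmat v w (x t) (y t)) *
              (∏ t : Fin n, Cmat v w (x t) (y (t + z)))) *
            (∑ σ : Equiv.Perm (Fin n),
              ((Equiv.Perm.sign σ : ℤ) : ℝ) * ∏ t : Fin n, v (x t) (σ t)) *
            (∑ γ : Equiv.Perm (Fin n),
              ((Equiv.Perm.sign γ : ℤ) : ℝ) * ∏ t : Fin n, w (y t) (γ t)) := by
          refine Finset.sum_congr rfl fun x _ => Finset.sum_congr rfl fun y _ => ?_
          symm
          calc ((∏ t : Fin n, lam (x t)) * (∏ t : Fin n, mu (y t)) *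
                (∏ t : Fin n, Cmat v w (x t) (y t)) *
                (∏ t : Fin n, Cmat v w (x t) (y (t + z)))) *
              (∑ σ : Equiv.Perm (Fin n),
                ((Equiv.Perm.sign σ : ℤ) : ℝ) * ∏ t : Fin n, v (x t) (σ t)) *
              (∑ γ : Equiv.Perm (Fin n),
                ((Equiv.Perm.sign γ : ℤ) : ℝ) * ∏ t : Fin n, w (y t) (γ t))
              = ((∏ t : Fin n, lam (x t)) * (∏ t : Fin n, mu (y t)) *
                (∏ t : Fin n, Cmat v w (x t) (y t)) *
                (∏ t : Fin n, Cmat v w (x t) (y (t + z)))) *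
                ((∑ σ : Equiv.Perm (Fin n),
                  ((Equiv.Perm.sign σ : ℤ) : ℝ) * ∏ t : Fin n, v (x t) (σ t)) *
                (∑ γ : Equiv.Perm (Fin n),
                  ((Equiv.Perm.sign γ : ℤ) : ℝ) * ∏ t : Fin n, w (y t) (γ t))) := by
                ring
            _ = ((∏ t : Fin n, lam (x t)) * (∏ t : Fin n, mu (y t)) *
                (∏ t : Fin n, Cmat v w (x t) (y t)) *
                (∏ t : Fin n, Cmat v w (x t) (y (t + z)))) *
                ∑ σ : Equiv.Perm (Fin n), ∑ γ : Equiv.Perm (Fin n),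
                  (((Equiv.Perm.sign σ : ℤ) : ℝ) * ∏ t : Fin n, v (x t) (σ t)) *
                  (((Equiv.Perm.sign γ : ℤ) : ℝ) * ∏ t : Fin n, w (y t) (γ t)) := by
                rw [Finset.sum_mul_sum]
            _ = ∑ σ : Equiv.Perm (Fin n),
                  ((∏ t : Fin n, lam (x t)) * (∏ t : Fin n, mu (y t)) *
                    (∏ t : Fin n, Cmat v w (x t) (y t)) *
                    (∏ t : Fin n, Cmat v w (x t) (y (t + z)))) *
                  ∑ γ : Equiv.Perm (Fin n),
                    (((Equiv.Perm.sign σ : ℤ) : ℝ) * ∏ t : Fin n, v (x t) (σ t)) *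
                    (((Equiv.Perm.sign γ : ℤ) : ℝ) * ∏ t : Fin n, w (y t) (γ t)) :=
                Finset.mul_sum _ _ _
            _ = ∑ σ : Equiv.Perm (Fin n), ∑ γ : Equiv.Perm (Fin n),
                  ((∏ t : Fin n, lam (x t)) * (∏ t : Fin n, mu (y t)) *
                    (∏ t : Fin n, Cmat v w (x t) (y t)) *
                    (∏ t : Fin n, Cmat v w (x t) (y (t + z)))) *
                  ((((Equiv.Perm.sign σ : ℤ) : ℝ) * ∏ t : Fin n, v (x t) (σ t)) *
                  (((Equiv.Perm.sign γ : ℤ) : ℝ) * ∏ t : Fin n, w (y t) (γ t))) :=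
                Finset.sum_congr rfl fun σ _ => Finset.mul_sum _ _ _
            _ = ∑ σ : Equiv.Perm (Fin n), ∑ γ : Equiv.Perm (Fin n),
                  ((Equiv.Perm.sign σ : ℤ) : ℝ) * ((Equiv.Perm.sign γ : ℤ) : ℝ) *
                    (((∏ t : Fin n, lam (x t)) * (∏ t : Fin n, mu (y t)) *
                      (∏ t : Fin n, Cmat v w (x t) (y t)) *
                      (∏ t : Fin n, Cmat v w (x t) (y (t + z)))) *
                    (∏ t : Fin n, v (x t) (σ t)) * (∏ t : Fin n, w (y t) (γ t))) :=
                Finset.sum_congr rfl fun σ _ => Finset.sum_congr rfl fun γ _ => by ring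
      _ = ∑ e : Equiv.Perm (Fin n), ∑ y : Fin n → Fin n,
            ((∏ t : Fin n, lam (e t)) * (∏ t : Fin n, mu (y t)) *
              (∏ t : Fin n, Cmat v w (e t) (y t)) *
              (∏ t : Fin n, Cmat v w (e t) (y (t + z)))) *
            (∑ σ : Equiv.Perm (Fin n),
              ((Equiv.Perm.sign σ : ℤ) : ℝ) * ∏ t : Fin n, v (e t) (σ t)) *
            (∑ γ : Equiv.Perm (Fin n),
              ((Equiv.Perm.sign γ : ℤ) : ℝ) * ∏ t : Fin n, w (y t) (γ t)) :=
          sum_fun_eq_sum_perm _ (fun x hx => Finset.sum_eq_zero fun y _ => by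
            rw [sumSign_eq_zero v x hx]; ring)
      _ = ∑ e : Equiv.Perm (Fin n), ∑ f : Equiv.Perm (Fin n),
            ((∏ t : Fin n, lam (e t)) * (∏ t : Fin n, mu (f t)) *
              (∏ t : Fin n, Cmat v w (e t) (f t)) *
              (∏ t : Fin n, Cmat v w (e t) (f (t + z)))) *
            (∑ σ : Equiv.Perm (Fin n),
              ((Equiv.Perm.sign σ : ℤ) : ℝ) * ∏ t : Fin n, v (e t) (σ t)) *
            (∑ γ : Equiv.Perm (Fin n),
              ((Equiv.Perm.sign γ : ℤ) : ℝ) * ∏ t : Fin n, w (f t) (γ t)) :=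
          Finset.sum_congr rfl fun e _ => sum_fun_eq_sum_perm _ (fun y hy => by
            rw [sumSign_eq_zero w y hy]; ring)
      _ = ∑ e : Equiv.Perm (Fin n), ∑ f : Equiv.Perm (Fin n),
            ((∏ t : Fin n, lam (e t)) * (∏ t : Fin n, mu (f t)) *
              (∏ t : Fin n, Cmat v w (e t) (f t)) *
              (∏ t : Fin n, Cmat v w (e t) (f (t + z)))) *
            (((Equiv.Perm.sign e : ℤ) : ℝ) * (Matrix.of v).det) *
            (((Equiv.Perm.sign f : ℤ) : ℝ) * (Matrix.of w).det) :=
          Finset.sum_congr rfl fun e _ => Finset.sum_congr rfl fun f _ => by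
            rw [sumSign_perm v e, sumSign_perm w f]
      _ = ((∏ i, lam i) * (∏ i, mu i) * (Matrix.of v).det * (Matrix.of w).det) *
            ∑ e : Equiv.Perm (Fin n), ∑ f : Equiv.Perm (Fin n),
              ((Equiv.Perm.sign e : ℤ) : ℝ) * ((Equiv.Perm.sign f : ℤ) : ℝ) *
                ∏ t : Fin n, (Cmat v w (e t) (f t) * Cmat v w (e t) (f (t + z))) := by
          rw [Finset.mul_sum]
          refine Finset.sum_congr rfl fun e _ => ?_
          rw [Finset.mul_sum]
          refine Finset.sum_congr rfl fun f _ => ?_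
          rw [Finset.prod_mul_distrib, Equiv.prod_comp e lam, Equiv.prod_comp f mu]
          ring
      _ = 0 := by rw [Szero (Cmat v w) hc z hz, mul_zero]
  -- the right-hand side sum vanishes
  have hR : (∑ σ : Equiv.Perm (Fin n), ∑ γ : Equiv.Perm (Fin n),
      ((Equiv.Perm.sign σ : ℤ) : ℝ) * ((Equiv.Perm.sign γ : ℤ) : ℝ) *
        (∏ t : Fin n, ∑ m, v (σ t) m * w (γ t) m) *
        (∏ t : Fin n, ∑ m, v (σ t) m * w (γ (t + z)) m)) = 0 := by
    calc (∑ σ : Equiv.Perm (Fin n), ∑ γ : Equiv.Perm (Fin n),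
        ((Equiv.Perm.sign σ : ℤ) : ℝ) * ((Equiv.Perm.sign γ : ℤ) : ℝ) *
          (∏ t : Fin n, ∑ m, v (σ t) m * w (γ t) m) *
          (∏ t : Fin n, ∑ m, v (σ t) m * w (γ (t + z)) m))
        = ∑ σ : Equiv.Perm (Fin n), ∑ γ : Equiv.Perm (Fin n),
            ((Equiv.Perm.sign σ : ℤ) : ℝ) * ((Equiv.Perm.sign γ : ℤ) : ℝ) *
              ∏ t : Fin n, (Cmat v w (σ t) (γ t) * Cmat v w (σ t) (γ (t + z))) := by
          refine Finset.sum_congr rfl fun σ _ => Finset.sum_congr rfl fun γ _ => ?_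
          simp only [Cmat]
          rw [Finset.prod_mul_distrib]
          ring
      _ = 0 := Szero (Cmat v w) hc z hz
  rw [hL, hR, mul_zero]
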